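/- arXiv:1909.01644 — 2 statements merged into one kernel-verified Lean document; each statement's English description precedes it below -/
import Mathlib

section
/- Let λ > 1 and set λD = {λz : z ∈ D}, and let P(z) = z + 2iπ. For every arclength-integrable g : ∂D → ℂ, the function F(z) = (1/(iπ)) ∮_{∂D} g(u)/(u − z) du (boundary traversed counterclockwise) is holomorphic on Δ ∖ closure(λD) and satisfies ∫_{Δ ∖ closure(λD)} |F(z)/P(z)|² dA(z) < ∞. -/
open MeasureTheory Set

noncomputable section

/-- The open sector `Δ = {z : |arg z| < π/4}`. -/
def SectorDelta : Set ℂ := {z : ℂ | 0 < z.re ∧ |z.im| < z.re}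

/-- The reflected sector `π − Δ`. -/
def SectorPiDelta : Set ℂ := (fun z => (Real.pi : ℂ) - z) '' SectorDelta

/-- The open square `D = Δ ∩ (π − Δ)` with vertices `0, π/2 − iπ/2, π, π/2 + iπ/2`. -/
def SquareD : Set ℂ := SectorDelta ∩ SectorPiDelta

/-- Membership in the Bergman space `A²(Ω)`. -/
def MemA2 (Ω : Set ℂ) (f : ℂ → ℂ) : Prop :=
  DifferentiableOn ℂ f Ω ∧ ∫⁻ z in Ω, ENNReal.ofReal (‖f z‖ ^ 2) < ⊤

/-- Membership in the weighted Bergman space `A²(Ω, w)`. -/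
def MemA2W (Ω : Set ℂ) (w : ℂ → ℝ) (f : ℂ → ℂ) : Prop :=
  DifferentiableOn ℂ f Ω ∧ ∫⁻ z in Ω, ENNReal.ofReal (‖f z‖ ^ 2 * w z) < ⊤

/-- `log⁺ t = max (log t) 0`. -/
def logPlus (t : ℝ) : ℝ := Real.log (max t 1)

/-- Starting vertices of the four sides of `∂D`, counterclockwise. -/
def sideStart : Fin 4 → ℂ
  | 0 => 0
  | 1 => ((Real.pi / 2 : ℝ) : ℂ) * (1 - Complex.I)
  | 2 => ((Real.pi : ℝ) : ℂ)
  | 3 => ((Real.pi / 2 : ℝ) : ℂ) * (1 + Complex.I)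

/-- Direction vectors of the four sides of `∂D`, counterclockwise. -/
def sideDir : Fin 4 → ℂ
  | 0 => ((Real.pi / 2 : ℝ) : ℂ) * (1 - Complex.I)
  | 1 => ((Real.pi / 2 : ℝ) : ℂ) * (1 + Complex.I)
  | 2 => ((Real.pi / 2 : ℝ) : ℂ) * (Complex.I - 1)
  | 3 => -(((Real.pi / 2 : ℝ) : ℂ) * (1 + Complex.I))

/-- Parametrization of the `k`-th side of `∂D`. -/
def sidePath (k : Fin 4) (t : ℝ) : ℂ := sideStart k + (t : ℂ) * sideDir k

/-- `g` is arclength-integrable on `∂D` (each side has constant speed). -/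
def BoundaryIntegrable (g : ℂ → ℂ) : Prop :=
  ∀ k : Fin 4, IntervalIntegrable (fun t => ‖g (sidePath k t)‖) volume 0 1

/-- `∫_{∂D} |g| log⁺|g| |du| < ∞` (each side has constant speed). -/
def BoundaryLlogL (g : ℂ → ℂ) : Prop :=
  ∀ k : Fin 4, IntervalIntegrable
    (fun t => ‖g (sidePath k t)‖ * logPlus ‖g (sidePath k t)‖) volume 0 1

/-- The Cauchy integral `(1/(2πi)) ∮_{∂D} g(u)/(u − z) du`, `∂D` counterclockwise. -/
def cauchyD (g : ℂ → ℂ) (z : ℂ) : ℂ :=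
  (2 * (Real.pi : ℂ) * Complex.I)⁻¹ *
    ∑ k : Fin 4, ∫ t in (0:ℝ)..1, g (sidePath k t) * sideDir k / (sidePath k t - z)

/-- The Cauchy transform `(𝒞g)(z) = (1/(iπ)) ∫_ℝ g(t)/(t − z) dt` on the upper half-plane. -/
def cauchyTransform (g : ℝ → ℂ) (z : ℂ) : ℂ :=
  (Complex.I * (Real.pi : ℂ))⁻¹ * ∫ t : ℝ, g t / ((t : ℂ) - z)

/-- The Cauchy-type integral `F(z) = (1/(iπ)) ∮_{∂D} g(u)/(u − z) du`,
`∂D` counterclockwise. -/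
def cauchyD2 (g : ℂ → ℂ) (z : ℂ) : ℂ :=
  (Complex.I * (Real.pi : ℂ))⁻¹ *
    ∑ k : Fin 4, ∫ t in (0:ℝ)..1, g (sidePath k t) * sideDir k / (sidePath k t - z)

/-!
Outside `closure (λD)` the sector satisfies `Re z + |Im z| > λπ`, while `Re u + |Im u| ≤ π` on
`∂D`; since `Re z + |Im z|` is `2`-Lipschitz, the distance from `z` to `∂D` is at least a fixed
multiple of `Re z + |Im z| ≥ |z|`. Differentiating under the integral sign gives holomorphy, and
`|F(z)| ≲ ‖g‖_{L¹(∂D)} / |z|`. As `|z + 2iπ| ≥ Re z ≥ |z| / 2` on `Δ`, we get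
`|F / P|² ≲ (1 + |z|)⁻⁴`, which is integrable over `ℂ`.
-/

open Filter Topology

section CauchyTypeIntegral

variable {α : Type*} [MeasurableSpace α] {μ : Measure α} {f γ : α → ℂ} {z z₀ : ℂ} {r : ℝ}

lemma norm_integral_div_sub_le (hf : Integrable (fun t => ‖f t‖) μ) (hr : 0 < r)
    (hdist : ∀ᵐ t ∂μ, r ≤ ‖γ t - z‖) :
    ‖∫ t, f t / (γ t - z) ∂μ‖ ≤ (∫ t, ‖f t‖ ∂μ) / r := by
  rw [← integral_div]
  refine norm_integral_le_of_norm_le (hf.div_const r) (hdist.mono fun t ht => ?_)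
  rw [norm_div]
  gcongr

/-- Off the curve the integrand determines `f`, so a non-measurable `f` makes the integral
take its junk value `0`. -/
lemma integral_div_sub_of_not_aestronglyMeasurable (hf : ¬AEStronglyMeasurable f μ) (hγ : AEMeasurable γ μ)
    (hz : ∀ᵐ t ∂μ, γ t ≠ z) : ∫ t, f t / (γ t - z) ∂μ = 0 := by
  refine integral_undef fun hint => hf ?_
  refine ((hint.aemeasurable.mul (hγ.sub_const z)).aestronglyMeasurable).congr ?_
  filter_upwards [hz] with t ht
  simp only [Pi.mul_apply]
  field_simp [sub_ne_zero.2 ht]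

lemma differentiableAt_integral_div_sub (hf : Integrable (fun t => ‖f t‖) μ)
    (hγ : AEMeasurable γ μ) (hr : 0 < r) (hdist : ∀ᵐ t ∂μ, r ≤ ‖γ t - z₀‖) :
    DifferentiableAt ℂ (fun z => ∫ t, f t / (γ t - z) ∂μ) z₀ := by
  have hball : ∀ᵐ t ∂μ, ∀ z ∈ Metric.ball z₀ (r / 2), r / 2 ≤ ‖γ t - z‖ := by
    filter_upwards [hdist] with t ht z hz
    have := norm_sub_norm_le (γ t - z₀) (z - z₀)
    rw [Metric.mem_ball, dist_eq_norm] at hz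
    rw [sub_sub_sub_cancel_right] at this
    linarith
  by_cases hm : AEStronglyMeasurable f μ
  swap
  · refine (differentiableAt_const 0).congr_of_eventuallyEq ?_
    filter_upwards [Metric.ball_mem_nhds z₀ (half_pos hr)] with z hz
    refine integral_div_sub_of_not_aestronglyMeasurable hm hγ ?_
    filter_upwards [hball] with t ht h
    have := ht z hz
    rw [h, sub_self, norm_zero] at this
    linarith
  have hmeas : ∀ (n : ℕ) (z : ℂ), AEStronglyMeasurable (fun t => f t / (γ t - z) ^ n) μ :=
    fun n z => (hm.aemeasurable.div ((hγ.sub_const z).pow_const n)).aestronglyMeasurable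
  have hint : Integrable (fun t => f t / (γ t - z₀)) μ := by
    refine (hf.div_const r).mono' (by simpa using hmeas 1 z₀) (hdist.mono fun t ht => ?_)
    rw [norm_div]
    gcongr
  have hderiv := hasDerivAt_integral_of_dominated_loc_of_deriv_le
    (F' := fun z t => f t / (γ t - z) ^ 2) (bound := fun t => ‖f t‖ / (r / 2) ^ 2)
    (Metric.ball_mem_nhds z₀ (half_pos hr))
    (Eventually.of_forall fun z => by simpa using hmeas 1 z) hint (hmeas 2 z₀)
    (hball.mono fun t ht z hz => ?_) (hf.div_const _) (hball.mono fun t ht z hz => ?_)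
  · exact hderiv.2.differentiableAt
  · rw [norm_div, norm_pow]
    gcongr
    exact ht z hz
  · have hne : γ t - z ≠ 0 := norm_pos_iff.1 (lt_of_lt_of_le (half_pos hr) (ht z hz))
    simpa [div_eq_mul_inv] using
      (((hasDerivAt_id z).const_sub (γ t)).fun_inv hne).const_mul (f t)

end CauchyTypeIntegral

lemma setLIntegral_ofReal_norm_sq_lt_top {E : Type*} [NormedAddCommGroup E] {h : ℂ → E}
    {Ω : Set ℂ} {C : ℝ} (hΩ : MeasurableSet Ω) (hh : ∀ z ∈ Ω, ‖h z‖ * (1 + ‖z‖) ^ 2 ≤ C) :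
    ∫⁻ z in Ω, ENNReal.ofReal (‖h z‖ ^ 2) < ⊤ := by
  have hint : Integrable (fun z : ℂ => C ^ 2 * (1 + ‖z‖) ^ (-(4 : ℝ))) :=
    (integrable_one_add_norm (by norm_num [Complex.finrank_real_complex])).const_mul _
  calc ∫⁻ z in Ω, ENNReal.ofReal (‖h z‖ ^ 2)
      ≤ ∫⁻ z in Ω, ENNReal.ofReal (C ^ 2 * (1 + ‖z‖) ^ (-(4 : ℝ))) := by
        refine setLIntegral_mono' hΩ fun z hz => ENNReal.ofReal_le_ofReal ?_
        have hpos : 0 < 1 + ‖z‖ := by positivity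
        rw [Real.rpow_neg hpos.le, ← div_eq_mul_inv, le_div_iff₀ (by positivity),
          show (4 : ℝ) = (2 * 2 : ℕ) by norm_num, Real.rpow_natCast, pow_mul, ← mul_pow]
        exact pow_le_pow_left₀ (by positivity) (hh z hz) 2
    _ ≤ ∫⁻ z, ENNReal.ofReal (C ^ 2 * (1 + ‖z‖) ^ (-(4 : ℝ))) := setLIntegral_le_lintegral _ _
    _ < ⊤ := hint.lintegral_lt_top

lemma re_add_abs_im_le_add_two_mul_norm_sub (z w : ℂ) :
    z.re + |z.im| ≤ w.re + |w.im| + 2 * ‖w - z‖ := by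
  rw [norm_sub_rev]
  have hre : z.re - w.re ≤ ‖z - w‖ := by
    simpa using (le_abs_self _).trans (Complex.abs_re_le_norm (z - w))
  have him : |z.im| - |w.im| ≤ ‖z - w‖ := by
    simpa using (abs_sub_abs_le_abs_sub _ _).trans (Complex.abs_im_le_norm (z - w))
  linarith

lemma sidePath_re_add_abs_im_le (k : Fin 4) {t : ℝ} (ht : t ∈ Icc (0 : ℝ) 1) :
    (sidePath k t).re + |(sidePath k t).im| ≤ Real.pi := by
  obtain ⟨ht0, ht1⟩ := ht
  have hpi := Real.pi_pos
  fin_cases k <;>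
    simp only [sidePath, sideStart, sideDir, Complex.add_re, Complex.add_im, Complex.mul_re,
      Complex.mul_im, Complex.ofReal_re, Complex.ofReal_im, Complex.sub_re, Complex.sub_im,
      Complex.one_re, Complex.one_im, Complex.I_re, Complex.I_im, Complex.neg_re,
      Complex.neg_im, Complex.zero_re, Complex.zero_im] <;>
    rw [← le_sub_iff_add_le', abs_le'] <;> constructor <;> nlinarith

lemma mem_dilation_squareD {lam : ℝ} (hlam : 0 < lam) {w : ℂ} (him : |w.im| < w.re)
    (hsum : w.re + |w.im| < lam * Real.pi) : w ∈ (fun z => (lam : ℂ) * z) '' SquareD := by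
  refine ⟨w / lam, ?_, by field_simp [Complex.ofReal_ne_zero.2 hlam.ne']⟩
  have him' : |(w / lam).im| < (w / lam).re := by
    rw [Complex.div_ofReal_re, Complex.div_ofReal_im, abs_div, abs_of_pos hlam]
    gcongr
  have hsum' : (w / lam).re + |(w / lam).im| < Real.pi := by
    rw [Complex.div_ofReal_re, Complex.div_ofReal_im, abs_div, abs_of_pos hlam, ← add_div,
      div_lt_iff₀ hlam]
    linarith
  refine ⟨⟨(abs_nonneg _).trans_lt him', him'⟩, Real.pi - w / lam, ⟨?_, ?_⟩, sub_sub_cancel _ _⟩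
  · simp only [Complex.sub_re, Complex.ofReal_re]
    linarith [abs_nonneg (w / lam).im]
  · simp only [Complex.sub_re, Complex.sub_im, Complex.ofReal_re, Complex.ofReal_im, zero_sub,
      abs_neg]
    linarith

/-- If `|Im z| ≤ Re z` and `Re z + |Im z| ≤ λπ`, the open segment from `z` to the centre `λπ/2`
lies in `λD`. -/
lemma lt_re_add_abs_im_of_notMem_closure {lam : ℝ} (hlam : 0 < lam) {z : ℂ}
    (him : |z.im| ≤ z.re) (hz : z ∉ closure ((fun z => (lam : ℂ) * z) '' SquareD)) :
    lam * Real.pi < z.re + |z.im| := by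
  by_contra! hsum
  refine hz (mem_closure_of_tendsto (f := fun δ : ℝ => z + δ * ((lam * Real.pi / 2 : ℝ) - z))
    (b := 𝓝[>] 0) ?_ ?_)
  · exact tendsto_nhdsWithin_of_tendsto_nhds (by
      simpa using ((Complex.continuous_ofReal.mul continuous_const).const_add z).tendsto (0 : ℝ))
  · filter_upwards [Ioo_mem_nhdsGT one_pos] with δ ⟨hδ0, hδ1⟩
    have hcentre : 0 < δ * (lam * Real.pi) := by positivity
    have hre : (z + δ * ((lam * Real.pi / 2 : ℝ) - z)).re
        = (1 - δ) * z.re + δ * (lam * Real.pi) / 2 := by simp; ring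
    have him' : |(z + δ * ((lam * Real.pi / 2 : ℝ) - z)).im| = (1 - δ) * |z.im| := by
      rw [← abs_of_pos (sub_pos.2 hδ1), ← abs_mul]
      congr 1
      simp
      ring
    apply mem_dilation_squareD hlam <;> rw [hre, him'] <;> nlinarith

lemma isOpen_sectorDelta : IsOpen SectorDelta :=
  (isOpen_lt continuous_const Complex.continuous_re).inter
    (isOpen_lt (continuous_abs.comp Complex.continuous_im) Complex.continuous_re)

/-- `∫_{∂D} |g(u)| |du|`. -/
def boundaryL1Norm (g : ℂ → ℂ) : ℝ :=
  ∑ k : Fin 4, ∫ t in Ioc (0 : ℝ) 1, ‖g (sidePath k t) * sideDir k‖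

lemma boundaryL1Norm_nonneg (g : ℂ → ℂ) : 0 ≤ boundaryL1Norm g :=
  Finset.sum_nonneg fun _ _ => integral_nonneg fun _ => norm_nonneg _

lemma cauchyD2_eq_sum_integral (g : ℂ → ℂ) (z : ℂ) :
    cauchyD2 g z = (Complex.I * Real.pi)⁻¹ *
      ∑ k : Fin 4, ∫ t in Ioc (0 : ℝ) 1, g (sidePath k t) * sideDir k / (sidePath k t - z) := by
  simp only [cauchyD2, intervalIntegral.integral_of_le zero_le_one]

lemma integrable_norm_mul_sideDir {g : ℂ → ℂ} (hg : BoundaryIntegrable g) (k : Fin 4) :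
    Integrable (fun t => ‖g (sidePath k t) * sideDir k‖) (volume.restrict (Ioc (0 : ℝ) 1)) := by
  simpa only [norm_mul] using (hg k).1.mul_const ‖sideDir k‖

lemma ae_le_norm_sidePath_sub (k : Fin 4) (z : ℂ) :
    ∀ᵐ t ∂(volume.restrict (Ioc (0 : ℝ) 1)),
      (z.re + |z.im| - Real.pi) / 2 ≤ ‖sidePath k t - z‖ := by
  refine ae_restrict_of_forall_mem measurableSet_Ioc fun t ht => ?_
  have := re_add_abs_im_le_add_two_mul_norm_sub z (sidePath k t)
  have := sidePath_re_add_abs_im_le k (Ioc_subset_Icc_self ht)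
  linarith

lemma differentiableOn_cauchyD2 {g : ℂ → ℂ} (hg : BoundaryIntegrable g) {U : Set ℂ}
    (hU : ∀ z ∈ U, Real.pi < z.re + |z.im|) : DifferentiableOn ℂ (cauchyD2 g) U := by
  intro z hz
  rw [funext (cauchyD2_eq_sum_integral g)]
  refine (DifferentiableAt.const_mul (DifferentiableAt.fun_sum fun k _ => ?_) _)
    |>.differentiableWithinAt
  exact differentiableAt_integral_div_sub (integrable_norm_mul_sideDir hg k)
    (by unfold sidePath; fun_prop) (by linarith [hU z hz]) (ae_le_norm_sidePath_sub k z)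

lemma norm_cauchyD2_le {g : ℂ → ℂ} (hg : BoundaryIntegrable g) {z : ℂ}
    (hz : Real.pi < z.re + |z.im|) :
    ‖cauchyD2 g z‖ ≤ 2 * boundaryL1Norm g / (Real.pi * (z.re + |z.im| - Real.pi)) := by
  have hr : 0 < (z.re + |z.im| - Real.pi) / 2 := by linarith
  have hsides : ‖∑ k : Fin 4, ∫ t in Ioc (0 : ℝ) 1,
      g (sidePath k t) * sideDir k / (sidePath k t - z)‖
        ≤ boundaryL1Norm g / ((z.re + |z.im| - Real.pi) / 2) := by
    rw [boundaryL1Norm, Finset.sum_div]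
    exact (norm_sum_le _ _).trans (Finset.sum_le_sum fun k _ => norm_integral_div_sub_le
      (integrable_norm_mul_sideDir hg k) hr (ae_le_norm_sidePath_sub k z))
  have hconst : ‖(Complex.I * Real.pi)⁻¹‖ = Real.pi⁻¹ := by
    simp [abs_of_pos Real.pi_pos]
  rw [cauchyD2_eq_sum_integral, norm_mul, hconst]
  calc Real.pi⁻¹ * ‖_‖ ≤ Real.pi⁻¹ * (boundaryL1Norm g / ((z.re + |z.im| - Real.pi) / 2)) := by
        gcongr
    _ = _ := by field_simp

lemma norm_cauchyD2_div_mul_sq_le {g : ℂ → ℂ} (hg : BoundaryIntegrable g) {lam : ℝ}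
    (hlam : 1 < lam) {z : ℂ} (him : |z.im| ≤ z.re) (hs : lam * Real.pi < z.re + |z.im|) :
    ‖cauchyD2 g z / (z + 2 * Complex.I * Real.pi)‖ * (1 + ‖z‖) ^ 2
      ≤ 16 * lam * boundaryL1Norm g / (Real.pi * (lam - 1)) := by
  set s := z.re + |z.im|
  set C := 2 * lam * boundaryL1Norm g / (Real.pi * (lam - 1)) with hCdef
  have hpi := Real.pi_pos
  have hlam1 : 0 < lam - 1 := sub_pos.2 hlam
  have hC : 0 ≤ C := div_nonneg (by nlinarith [boundaryL1Norm_nonneg g]) (by positivity)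
  have hπs : Real.pi < s := by nlinarith
  have hs0 : 0 < s := hpi.trans hπs
  have hF : ‖cauchyD2 g z‖ ≤ C / s := by
    calc ‖cauchyD2 g z‖ ≤ 2 * boundaryL1Norm g / (Real.pi * (s - Real.pi)) :=
          norm_cauchyD2_le hg hπs
      _ ≤ 2 * boundaryL1Norm g / (Real.pi * ((lam - 1) / lam * s)) := by
          have hk : (lam - 1) / lam * s ≤ s - Real.pi := by
            rw [div_mul_eq_mul_div, div_le_iff₀ (by linarith)]
            nlinarith
          have hk0 : 0 < (lam - 1) / lam * s := mul_pos (div_pos hlam1 (by linarith)) hs0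
          have := boundaryL1Norm_nonneg g
          gcongr
      _ = C / s := by rw [hCdef]; field_simp
  have hP : s / 2 ≤ ‖z + 2 * Complex.I * Real.pi‖ := by
    calc s / 2 ≤ (z + 2 * Complex.I * Real.pi).re := by simp [s]; linarith
      _ ≤ _ := (le_abs_self _).trans (Complex.abs_re_le_norm _)
  have hz : 1 + ‖z‖ ≤ 2 * s := by
    have := Complex.norm_le_abs_re_add_abs_im z
    rw [abs_of_nonneg ((abs_nonneg _).trans him)] at this
    nlinarith [Real.pi_gt_three]
  calc ‖cauchyD2 g z / (z + 2 * Complex.I * Real.pi)‖ * (1 + ‖z‖) ^ 2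
      ≤ C / s / (s / 2) * (2 * s) ^ 2 := by
        rw [norm_div]
        gcongr
    _ = 16 * lam * boundaryL1Norm g / (Real.pi * (lam - 1)) := by
        rw [hCdef]
        field_simp
        ring

/-- For `λ > 1`, the Cauchy-type integral of an integrable boundary function,
divided by `P(z) = z + 2iπ`, is square integrable on `Δ ∖ closure(λD)`. -/
theorem cauchy_integral_in_bergman_outside_dilation
    (lam : ℝ) (hlam : 1 < lam) (g : ℂ → ℂ) (hg : BoundaryIntegrable g) :
    DifferentiableOn ℂ (cauchyD2 g)
        (SectorDelta \ closure ((fun z => (lam : ℂ) * z) '' SquareD)) ∧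
    ∫⁻ z in SectorDelta \ closure ((fun z => (lam : ℂ) * z) '' SquareD),
        ENNReal.ofReal (‖cauchyD2 g z / (z + 2 * Complex.I * (Real.pi : ℂ))‖ ^ 2) < ⊤ := by
  have hs : ∀ z ∈ SectorDelta \ closure ((fun z => (lam : ℂ) * z) '' SquareD),
      lam * Real.pi < z.re + |z.im| := fun z hz =>
    lt_re_add_abs_im_of_notMem_closure (by linarith) hz.1.2.le hz.2
  refine ⟨differentiableOn_cauchyD2 hg fun z hz => ?_,
    setLIntegral_ofReal_norm_sq_lt_top (isOpen_sectorDelta.sdiff isClosed_closure).measurableSet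
      fun z hz => norm_cauchyD2_div_mul_sq_le hg hlam hz.1.2.le (hs z hz)⟩
  nlinarith [hs z hz, Real.pi_pos]

end
end

section
/- Let g : ∂D → ℂ be integrable on ∂D with ∫_{∂D} |g(u)| log⁺(|g(u)|) |du| < ∞ and let f(z) = (1/(2πi)) ∮_{∂D} g(u)/(u − z) du for z ∈ D. Then there is a constant C > 0 (depending on g) such that for all z ∈ D with d(z, ∂D) < 1/2, |f(z)| ≤ C / (d(z, ∂D) · log(1/d(z, ∂D))), where d(z, ∂D) is the Euclidean distance from z to the boundary of D. -/
open MeasureTheory Set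

noncomputable section

lemma logPlus_nonneg (s : ℝ) : 0 ≤ logPlus s :=
  Real.log_nonneg (le_max_right _ _)

lemma young_ineq (s t : ℝ) (hs : 0 ≤ s) : s * t ≤ s * logPlus s + Real.exp t := by
  rcases le_or_gt s 1 with h1 | h1
  · rcases le_or_gt t 0 with h2 | h2
    · have : s * t ≤ 0 := mul_nonpos_of_nonneg_of_nonpos hs h2
      have h3 : 0 ≤ s * logPlus s := mul_nonneg hs (logPlus_nonneg s)
      nlinarith [Real.exp_pos t]
    · have : s * t ≤ t := by nlinarith
      have h4 : t ≤ Real.exp t := by nlinarith [Real.add_one_le_exp t]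
      have h3 : 0 ≤ s * logPlus s := mul_nonneg hs (logPlus_nonneg s)
      linarith
  · have hlog : logPlus s = Real.log s := by
      unfold logPlus; rw [max_eq_left h1.le]
    rcases le_or_gt t (Real.log s) with h2 | h2
    · have : s * t ≤ s * Real.log s := by nlinarith
      rw [hlog]; nlinarith [Real.exp_pos t]
    · set x := t - Real.log s with hx
      have hxpos : 0 < x := by simp [hx]; linarith
      have hxe : x ≤ Real.exp x := by nlinarith [Real.add_one_le_exp x]
      have : s * x ≤ s * Real.exp x := by nlinarith
      have hse : s * Real.exp x = Real.exp t := by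
        rw [← Real.exp_log (by linarith : (0:ℝ) < s), ← Real.exp_add]
        rw [hx]; ring_nf
      rw [hlog]
      nlinarith
lemma sectorPiDelta_eq : SectorPiDelta = (fun z => (Real.pi : ℂ) - z) ⁻¹' SectorDelta := by
  have h : Function.LeftInverse (fun z : ℂ => (Real.pi : ℂ) - z) (fun z => (Real.pi : ℂ) - z) :=
    fun z => by ring
  exact congrFun (Set.image_eq_preimage_of_inverse h h) SectorDelta

lemma isOpen_squareD : IsOpen SquareD := by
  have h1 : IsOpen SectorDelta := by
    have : SectorDelta = {z : ℂ | 0 < z.re} ∩ {z : ℂ | |z.im| < z.re} := rfl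
    rw [this]
    exact (isOpen_lt continuous_const Complex.continuous_re).inter
      (isOpen_lt (continuous_abs.comp Complex.continuous_im) Complex.continuous_re)
  have h2 : IsOpen SectorPiDelta := by
    rw [sectorPiDelta_eq]
    exact h1.preimage (continuous_const.sub continuous_id)
  exact h1.inter h2

lemma normSq_sideDir (k : Fin 4) : Complex.normSq (sideDir k) = Real.pi ^ 2 / 2 := by
  fin_cases k <;>
    simp [sideDir, Complex.normSq_apply, Complex.mul_re, Complex.mul_im] <;> ring

lemma norm_sideDir_ge (k : Fin 4) : 2 ≤ ‖sideDir k‖ := by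
  have h := normSq_sideDir k
  have h2 : ‖sideDir k‖ ^ 2 = Real.pi ^ 2 / 2 := by
    rw [Complex.sq_norm]; exact h
  nlinarith [norm_nonneg (sideDir k), Real.pi_gt_three]

lemma norm_sideDir_le (k : Fin 4) : ‖sideDir k‖ ≤ Real.pi := by
  have h := normSq_sideDir k
  have h2 : ‖sideDir k‖ ^ 2 = Real.pi ^ 2 / 2 := by
    rw [Complex.sq_norm]; exact h
  nlinarith [norm_nonneg (sideDir k), Real.pi_pos]

lemma proj_lower_bound (v w : ℂ) : ∃ t₀ : ℝ, ∀ t : ℝ, ‖v‖ * |t - t₀| ≤ ‖(t : ℂ) * v - w‖ := by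
  rcases eq_or_ne v 0 with rfl | hv
  · exact ⟨0, fun t => by simp⟩
  have hv2 : 0 < v.re ^ 2 + v.im ^ 2 := by
    rcases Complex.ext_iff.not.mp hv with h
    have : v.re ≠ 0 ∨ v.im ≠ 0 := by
      by_contra hc
      push_neg at hc
      exact hv (Complex.ext hc.1 hc.2)
    rcases this with h | h <;> positivity
  refine ⟨(v.re * w.re + v.im * w.im) / (v.re ^ 2 + v.im ^ 2), fun t => ?_⟩
  have hsq : (‖v‖ * |t - (v.re * w.re + v.im * w.im) / (v.re ^ 2 + v.im ^ 2)|) ^ 2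
      ≤ ‖(t : ℂ) * v - w‖ ^ 2 := by
    rw [mul_pow, sq_abs, Complex.sq_norm, Complex.sq_norm, Complex.normSq_apply,
      Complex.normSq_apply]
    simp only [Complex.sub_re, Complex.sub_im, Complex.mul_re, Complex.mul_im,
      Complex.ofReal_re, Complex.ofReal_im]
    have key : (v.re * w.im - v.im * w.re) ^ 2 ≥ 0 := sq_nonneg _
    field_simp
    ring_nf
    nlinarith [sq_nonneg (v.re * w.im - v.im * w.re), sq_nonneg (t * (v.re^2 + v.im^2) - (v.re*w.re + v.im*w.im))]
  nlinarith [norm_nonneg ((t : ℂ) * v - w), mul_nonneg (norm_nonneg v) (abs_nonneg (t - (v.re * w.re + v.im * w.im) / (v.re ^ 2 + v.im ^ 2)))]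

lemma mem_squareD_iff (z : ℂ) : z ∈ SquareD ↔
    (0 < z.re ∧ |z.im| < z.re) ∧
      (0 < ((Real.pi : ℂ) - z).re ∧ |((Real.pi : ℂ) - z).im| < ((Real.pi : ℂ) - z).re) := by
  unfold SquareD
  rw [Set.mem_inter_iff, sectorPiDelta_eq]
  rfl

lemma sidePath_not_mem (k : Fin 4) (t : ℝ) : sidePath k t ∉ SquareD := by
  rw [mem_squareD_iff]
  fin_cases k <;>
    simp only [sidePath, sideStart, sideDir, Fin.isValue] <;>
    rintro ⟨⟨h1, h2⟩, ⟨h3, h4⟩⟩ <;>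
    simp only [Complex.add_re, Complex.add_im, Complex.sub_re, Complex.sub_im, Complex.mul_re,
      Complex.mul_im, Complex.ofReal_re, Complex.ofReal_im, Complex.one_re, Complex.one_im,
      Complex.I_re, Complex.I_im, Complex.neg_re, Complex.neg_im, Complex.zero_re,
      Complex.zero_im, Complex.sub_re, Complex.sub_im] at h1 h2 h3 h4
  · -- k = 0 : |im| = t π/2 ≥ re
    rw [abs_lt] at h2
    have hpi := Real.pi_pos
    rcases abs_cases t with ⟨he, _⟩ | ⟨he, _⟩ <;> nlinarith [h2.1, h2.2]
  · -- k = 1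
    rw [abs_lt] at h4
    have hpi := Real.pi_pos
    nlinarith [h4.1, h4.2]
  · -- k = 2
    rw [abs_lt] at h4
    have hpi := Real.pi_pos
    nlinarith [h4.1, h4.2]
  · -- k = 3
    rw [abs_lt] at h2
    have hpi := Real.pi_pos
    nlinarith [h2.1, h2.2]

lemma squareD_ne_univ : SquareD ≠ Set.univ := by
  intro h
  have : (0 : ℂ) ∈ SquareD := h ▸ Set.mem_univ _
  rw [mem_squareD_iff] at this
  simp at this

lemma infDist_frontier_eq {z : ℂ} (hz : z ∈ SquareD) :
    Metric.infDist z (frontier SquareD) = Metric.infDist z SquareDᶜ := by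
  obtain ⟨y, hy, hyd⟩ := exists_mem_frontier_infDist_compl_eq_dist hz squareD_ne_univ
  apply le_antisymm
  · rw [hyd]
    exact Metric.infDist_le_dist_of_mem hy
  · apply Metric.infDist_le_infDist_of_subset _ ⟨y, hy⟩
    rw [← frontier_compl]
    exact isOpen_squareD.isClosed_compl.frontier_subset

lemma infDist_frontier_pos {z : ℂ} (hz : z ∈ SquareD) :
    0 < Metric.infDist z (frontier SquareD) := by
  rw [infDist_frontier_eq hz]
  refine (isOpen_squareD.isClosed_compl.notMem_iff_infDist_pos ?_).mp (by simpa using hz)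
  refine ⟨0, fun h => ?_⟩
  have := (mem_squareD_iff 0).mp h
  simp at this

lemma infDist_le_dist_compl {z w : ℂ} (hz : z ∈ SquareD) (hw : w ∉ SquareD) :
    Metric.infDist z (frontier SquareD) ≤ dist z w := by
  rw [infDist_frontier_eq hz]
  exact Metric.infDist_le_dist_of_mem hw
lemma intervalIntegrable_indicator_Icc (a b c : ℝ) :
    IntervalIntegrable (Set.indicator (Icc a b) (fun _ => c)) volume 0 1 := by
  apply MeasureTheory.Integrable.intervalIntegrable
  rw [MeasureTheory.integrable_indicator_iff measurableSet_Icc]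
  exact MeasureTheory.integrableOn_const (by rw [Real.volume_Icc]; exact ENNReal.ofReal_ne_top) (by simp)

lemma integral_indicator_Icc_le (a b c : ℝ) (hc : 0 ≤ c) (hab : a ≤ b) :
    ∫ t in (0:ℝ)..1, (Set.indicator (Icc a b) (fun _ => c) t) ≤ c * (b - a) := by
  rw [intervalIntegral.integral_of_le zero_le_one,
    MeasureTheory.setIntegral_indicator measurableSet_Icc, MeasureTheory.setIntegral_const]
  have h1 : (volume (Ioc (0:ℝ) 1 ∩ Icc a b)).toReal ≤ (volume (Icc a b)).toReal := by
    apply ENNReal.toReal_mono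
    · rw [Real.volume_Icc]; exact ENNReal.ofReal_ne_top
    · exact measure_mono inter_subset_right
  rw [Real.volume_Icc] at h1
  rw [ENNReal.toReal_ofReal (by linarith)] at h1
  calc (volume (Ioc (0:ℝ) 1 ∩ Icc a b)).toReal • c ≤ (b - a) * c := by
        rw [smul_eq_mul]
        exact mul_le_mul_of_nonneg_right h1 hc
    _ = c * (b - a) := by ring

lemma exp_integral_bound (d t₀ : ℝ) (m : ℝ → ℝ) (hd : 0 < d) (hd2 : d < 1/2)
    (hm : ∀ t, d ≤ m t) (hm2 : ∀ t, 2 * |t - t₀| ≤ m t) (hcont : Continuous m) :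
    ∫ t in (0:ℝ)..1, Real.exp (d * Real.log (1/d) / m t) ≤ 12 := by
  set L := Real.log (1/d) with hL
  have hLpos : 0 < L := Real.log_pos (by rw [lt_div_iff₀ hd]; linarith)
  set r := Real.sqrt d with hr
  have hrpos : 0 < r := Real.sqrt_pos.2 hd
  have hr2 : r ^ 2 = d := Real.sq_sqrt hd.le
  have hdr : d ≤ r := by nlinarith [Real.sqrt_lt_sqrt (le_refl 0) hd]
  have hrL : r * L ≤ 2 := by
    have h1 : L = 2 * Real.log (1/r) := by
      rw [hL, one_div, one_div, Real.log_inv, Real.log_inv, ← hr2, Real.log_pow]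
      push_cast
      ring
    have h2 : Real.log (1/r) ≤ 1/r := (Real.log_le_sub_one_of_pos (by positivity)).trans (by linarith)
    calc r * L = 2 * (r * Real.log (1/r)) := by rw [h1]; ring
      _ ≤ 2 * (r * (1/r)) := by
          apply mul_le_mul_of_nonneg_left _ (by norm_num)
          exact mul_le_mul_of_nonneg_left h2 hrpos.le
      _ = 2 := by field_simp
  have hexpL : Real.exp L = 1/d := Real.exp_log (by positivity)
  have hexpL2 : Real.exp (L/2) = 1/r := by
    have hsq : Real.exp (L/2) ^ 2 = 1/d := by
      rw [← Real.exp_nat_mul]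
      push_cast
      rw [show (2:ℝ) * (L/2) = L by ring, hexpL]
    have hpos := Real.exp_pos (L/2)
    have hprod : Real.exp (L/2) * r = 1 := by
      have hsq2 : (Real.exp (L/2) * r) ^ 2 = 1 := by
        rw [mul_pow, hsq, hr2]
        field_simp
      nlinarith [mul_pos hpos hrpos]
    rw [eq_div_iff hrpos.ne']
    exact hprod
  -- pointwise bound
  have key : ∀ t ∈ Icc (0:ℝ) 1, Real.exp (d * L / m t) ≤
      Set.indicator (Icc (t₀ - d) (t₀ + d)) (fun _ => Real.exp L) t
      + (Set.indicator (Icc (t₀ - r) (t₀ + r)) (fun _ => Real.exp (L/2)) t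
        + Real.exp 2) := by
    intro t _
    have hmt : 0 < m t := lt_of_lt_of_le hd (hm t)
    have hind1 : ∀ (a b c : ℝ), 0 ≤ c → (0:ℝ) ≤ Set.indicator (Icc a b) (fun _ => c) t := by
      intro a b c hc
      exact Set.indicator_nonneg (fun _ _ => hc) t
    rcases le_or_gt |t - t₀| d with h1 | h1
    · have ht : t ∈ Icc (t₀ - d) (t₀ + d) := by
        rw [abs_le] at h1
        constructor <;> linarith [h1.1, h1.2]
      rw [Set.indicator_of_mem ht]
      have : Real.exp (d * L / m t) ≤ Real.exp L := by
        apply Real.exp_le_exp.2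
        rw [div_le_iff₀ hmt]
        nlinarith [hm t]
      nlinarith [hind1 (t₀ - r) (t₀ + r) (Real.exp (L/2)) (Real.exp_pos _).le, Real.exp_pos 2]
    · rcases le_or_gt |t - t₀| r with h2 | h2
      · have ht : t ∈ Icc (t₀ - r) (t₀ + r) := by
          rw [abs_le] at h2
          constructor <;> linarith [h2.1, h2.2]
        rw [Set.indicator_of_mem ht]
        have : Real.exp (d * L / m t) ≤ Real.exp (L/2) := by
          apply Real.exp_le_exp.2
          rw [div_le_iff₀ hmt]
          nlinarith [hm2 t, abs_nonneg (t - t₀)]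
        nlinarith [hind1 (t₀ - d) (t₀ + d) (Real.exp L) (Real.exp_pos _).le, Real.exp_pos 2]
      · have : Real.exp (d * L / m t) ≤ Real.exp 2 := by
          apply Real.exp_le_exp.2
          rw [div_le_iff₀ hmt]
          have h3 : 2 * r ≤ m t := le_trans (by nlinarith) (hm2 t)
          nlinarith [hr2]
        nlinarith [hind1 (t₀ - d) (t₀ + d) (Real.exp L) (Real.exp_pos _).le,
          hind1 (t₀ - r) (t₀ + r) (Real.exp (L/2)) (Real.exp_pos _).le]
  -- integrability
  have hi1 : IntervalIntegrable (fun t => Real.exp (d * L / m t)) volume 0 1 := by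
    apply Continuous.intervalIntegrable
    apply Real.continuous_exp.comp
    apply Continuous.div continuous_const hcont
    intro t
    exact ne_of_gt (lt_of_lt_of_le hd (hm t))
  have hi2 := intervalIntegrable_indicator_Icc (t₀ - d) (t₀ + d) (Real.exp L)
  have hi3 := intervalIntegrable_indicator_Icc (t₀ - r) (t₀ + r) (Real.exp (L/2))
  have hi4 : IntervalIntegrable (fun _ : ℝ => Real.exp 2) volume 0 1 :=
    intervalIntegrable_const
  calc ∫ t in (0:ℝ)..1, Real.exp (d * L / m t)
      ≤ ∫ t in (0:ℝ)..1, (Set.indicator (Icc (t₀ - d) (t₀ + d)) (fun _ => Real.exp L) t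
        + (Set.indicator (Icc (t₀ - r) (t₀ + r)) (fun _ => Real.exp (L/2)) t + Real.exp 2)) :=
        intervalIntegral.integral_mono_on zero_le_one hi1 (hi2.add (hi3.add hi4)) key
    _ = (∫ t in (0:ℝ)..1, Set.indicator (Icc (t₀ - d) (t₀ + d)) (fun _ => Real.exp L) t)
        + ((∫ t in (0:ℝ)..1, Set.indicator (Icc (t₀ - r) (t₀ + r)) (fun _ => Real.exp (L/2)) t)
        + ∫ t in (0:ℝ)..1, (Real.exp 2 : ℝ)) := by
        rw [intervalIntegral.integral_add hi2 (hi3.add hi4),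
          intervalIntegral.integral_add hi3 hi4]
    _ ≤ Real.exp L * ((t₀ + d) - (t₀ - d)) + (Real.exp (L/2) * ((t₀ + r) - (t₀ - r)) + Real.exp 2) := by
        gcongr
        · exact integral_indicator_Icc_le _ _ _ (Real.exp_pos _).le (by linarith)
        · exact integral_indicator_Icc_le _ _ _ (Real.exp_pos _).le (by linarith)
        · simp
    _ ≤ 12 := by
        have he2 : Real.exp 2 ≤ 8 := by
          have h := Real.exp_one_lt_d9
          rw [show (2:ℝ) = 1 + 1 by norm_num, Real.exp_add]
          nlinarith [Real.exp_pos 1]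
        have e1 : Real.exp L * ((t₀ + d) - (t₀ - d)) = 2 := by
          rw [hexpL]; field_simp; ring
        have e2 : Real.exp (L/2) * ((t₀ + r) - (t₀ - r)) = 2 := by
          rw [hexpL2]; field_simp; ring
        rw [e1, e2]; linarith

lemma sidePath_sub (k : Fin 4) (z : ℂ) (t : ℝ) :
    (t : ℂ) * sideDir k - (z - sideStart k) = sidePath k t - z := by
  unfold sidePath; ring

lemma continuous_sidePath_sub (k : Fin 4) (z : ℂ) :
    Continuous (fun t : ℝ => ‖sidePath k t - z‖) := by
  apply Continuous.norm
  exact (continuous_const.add (Complex.continuous_ofReal.mul continuous_const)).sub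
    continuous_const

/-- Per-side estimate. -/
lemma side_estimate (g : ℂ → ℂ) (hg : BoundaryIntegrable g) (hgLlogL : BoundaryLlogL g)
    (k : Fin 4) (z : ℂ) (hz : z ∈ SquareD)
    (hd2 : Metric.infDist z (frontier SquareD) < 1 / 2) :
    ‖∫ t in (0:ℝ)..1, g (sidePath k t) * sideDir k / (sidePath k t - z)‖ ≤
      (Real.pi / (Metric.infDist z (frontier SquareD) *
        Real.log (1 / Metric.infDist z (frontier SquareD)))) *
      ((∫ t in (0:ℝ)..1, ‖g (sidePath k t)‖ * logPlus ‖g (sidePath k t)‖) + 12) := by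
  set d := Metric.infDist z (frontier SquareD) with hdset
  have hd0 : 0 < d := infDist_frontier_pos hz
  set L := Real.log (1/d) with hLset
  have hL0 : 0 < L := Real.log_pos (by rw [lt_div_iff₀ hd0]; linarith)
  have hdL : 0 < d * L := mul_pos hd0 hL0
  set m : ℝ → ℝ := fun t => ‖sidePath k t - z‖ with hmset
  have hmd : ∀ t, d ≤ m t := by
    intro t
    have h := infDist_le_dist_compl hz (sidePath_not_mem k t)
    rwa [dist_eq_norm, norm_sub_rev] at h
  have hm0 : ∀ t, 0 < m t := fun t => lt_of_lt_of_le hd0 (hmd t)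
  obtain ⟨t₀, ht₀⟩ := proj_lower_bound (sideDir k) (z - sideStart k)
  have hm2 : ∀ t, 2 * |t - t₀| ≤ m t := by
    intro t
    have h := ht₀ t
    rw [sidePath_sub] at h
    have h2 := norm_sideDir_ge k
    have h3 := abs_nonneg (t - t₀)
    calc 2 * |t - t₀| ≤ ‖sideDir k‖ * |t - t₀| := by nlinarith
      _ ≤ m t := h
  have hmcont : Continuous m := continuous_sidePath_sub k z
  -- integrability facts
  have hiexp : IntervalIntegrable (fun t => Real.exp (d * L / m t)) volume 0 1 := by
    apply Continuous.intervalIntegrable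
    exact Real.continuous_exp.comp (Continuous.div continuous_const hmcont
      (fun t => (hm0 t).ne'))
  have hileft : IntervalIntegrable
      (fun t => ‖g (sidePath k t)‖ * (‖sideDir k‖ / m t)) volume 0 1 := by
    apply IntervalIntegrable.mul_continuousOn (hg k)
    exact (Continuous.div continuous_const hmcont (fun t => (hm0 t).ne')).continuousOn
  have hiright : IntervalIntegrable
      (fun t => (Real.pi / (d * L)) * ((‖g (sidePath k t)‖ * logPlus ‖g (sidePath k t)‖)
        + Real.exp (d * L / m t))) volume 0 1 :=
    ((hgLlogL k).add hiexp).const_mul _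
  calc ‖∫ t in (0:ℝ)..1, g (sidePath k t) * sideDir k / (sidePath k t - z)‖
      ≤ ∫ t in (0:ℝ)..1, ‖g (sidePath k t) * sideDir k / (sidePath k t - z)‖ :=
        intervalIntegral.norm_integral_le_integral_norm zero_le_one
    _ = ∫ t in (0:ℝ)..1, ‖g (sidePath k t)‖ * (‖sideDir k‖ / m t) := by
        apply intervalIntegral.integral_congr
        intro t _
        simp only [norm_div, norm_mul, mul_div_assoc]
        rfl
    _ ≤ ∫ t in (0:ℝ)..1, (Real.pi / (d * L)) *
          ((‖g (sidePath k t)‖ * logPlus ‖g (sidePath k t)‖) + Real.exp (d * L / m t)) := by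
        apply intervalIntegral.integral_mono_on zero_le_one hileft hiright
        intro t _
        set s := ‖g (sidePath k t)‖ with hsset
        have hs : 0 ≤ s := norm_nonneg _
        have hy := young_ineq s (d * L / m t) hs
        have hvn : ‖sideDir k‖ ≤ Real.pi := norm_sideDir_le k
        have h1 : s * (‖sideDir k‖ / m t) ≤ (Real.pi / m t) * s := by
          have hmt := hm0 t
          rw [mul_comm, div_mul_eq_mul_div, div_mul_eq_mul_div]
          gcongr
        have h2 : (Real.pi / m t) * s = (Real.pi / (d * L)) * (s * (d * L / m t)) := by
          have hd' : d ≠ 0 := hd0.ne'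
          have hL' : L ≠ 0 := hL0.ne'
          have hm' : m t ≠ 0 := (hm0 t).ne'
          field_simp
        have h3 : (Real.pi / (d * L)) * (s * (d * L / m t)) ≤
            (Real.pi / (d * L)) * (s * logPlus s + Real.exp (d * L / m t)) := by
          apply mul_le_mul_of_nonneg_left hy
          positivity
        linarith
    _ = (Real.pi / (d * L)) *
          ((∫ t in (0:ℝ)..1, ‖g (sidePath k t)‖ * logPlus ‖g (sidePath k t)‖)
            + ∫ t in (0:ℝ)..1, Real.exp (d * L / m t)) := by
        rw [intervalIntegral.integral_const_mul, intervalIntegral.integral_add (hgLlogL k) hiexp]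
    _ ≤ (Real.pi / (d * L)) *
          ((∫ t in (0:ℝ)..1, ‖g (sidePath k t)‖ * logPlus ‖g (sidePath k t)‖) + 12) := by
        apply mul_le_mul_of_nonneg_left _ (by positivity)
        have := exp_integral_bound d t₀ m hd0 hd2 hmd hm2 hmcont
        linarith

/-- Growth estimate for the Cauchy integral of an `L log⁺ L` boundary function on `∂D`:
`|f(z)| ≤ C / (d(z, ∂D) log(1/d(z, ∂D)))` near the boundary. -/
theorem cauchy_integral_growth_estimate
    (g : ℂ → ℂ) (hg : BoundaryIntegrable g) (hgLlogL : BoundaryLlogL g) :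
    ∃ C : ℝ, 0 < C ∧ ∀ z ∈ SquareD,
      Metric.infDist z (frontier SquareD) < 1 / 2 →
      ‖cauchyD g z‖ ≤ C / (Metric.infDist z (frontier SquareD) *
        Real.log (1 / Metric.infDist z (frontier SquareD))) := by
  set A : Fin 4 → ℝ :=
    fun k => ∫ t in (0:ℝ)..1, ‖g (sidePath k t)‖ * logPlus ‖g (sidePath k t)‖ with hA
  have hAnn : ∀ k, 0 ≤ A k := fun k =>
    intervalIntegral.integral_nonneg zero_le_one
      (fun t _ => mul_nonneg (norm_nonneg _) (logPlus_nonneg _))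
  have hSpos : (0:ℝ) < ∑ k : Fin 4, (A k + 12) := by
    apply Finset.sum_pos (fun k _ => by linarith [hAnn k]) Finset.univ_nonempty
  refine ⟨(∑ k : Fin 4, (A k + 12)) / 2, by linarith, ?_⟩
  intro z hz hd2
  set d := Metric.infDist z (frontier SquareD) with hdset
  have hd0 : 0 < d := infDist_frontier_pos hz
  set L := Real.log (1/d) with hLset
  have hL0 : 0 < L := Real.log_pos (by rw [lt_div_iff₀ hd0]; linarith)
  have hpi := Real.pi_pos
  have hnorm : ‖(2 * (Real.pi:ℂ) * Complex.I)⁻¹‖ = (2 * Real.pi)⁻¹ := by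
    rw [norm_inv]
    congr 1
    simp [map_mul,
      abs_of_pos Real.pi_pos]
  calc ‖cauchyD g z‖
      = ‖(2 * (Real.pi:ℂ) * Complex.I)⁻¹‖ *
        ‖∑ k : Fin 4, ∫ t in (0:ℝ)..1, g (sidePath k t) * sideDir k / (sidePath k t - z)‖ :=
        norm_mul _ _
    _ ≤ (2 * Real.pi)⁻¹ *
        ∑ k : Fin 4, ‖∫ t in (0:ℝ)..1, g (sidePath k t) * sideDir k / (sidePath k t - z)‖ := by
        rw [hnorm]
        exact mul_le_mul_of_nonneg_left (norm_sum_le _ _) (by positivity)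
    _ ≤ (2 * Real.pi)⁻¹ * ∑ k : Fin 4, (Real.pi / (d * L)) * (A k + 12) := by
        apply mul_le_mul_of_nonneg_left _ (by positivity)
        exact Finset.sum_le_sum (fun k _ => side_estimate g hg hgLlogL k z hz hd2)
    _ = (∑ k : Fin 4, (A k + 12)) / 2 / (d * L) := by
        rw [← Finset.mul_sum]
        have hd' : d ≠ 0 := hd0.ne'
        have hL' : L ≠ 0 := hL0.ne'
        have hpi' : Real.pi ≠ 0 := hpi.ne'
        field_simp

end
end
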